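/- Let α ≥ 1, β ≥ α+1, p > 0 and t ∈ (0,1). Then ₁F₁(α; β; −p/(t(1−t))) ≤ λ_{α−1,β−α−1}/(4 p B(α,β−α)). -/

import Mathlib

/-!
Kummer's representation `B(α, β-α) · ₁F₁(α; β; z) = ∫₀¹ s^(α-1) (1-s)^(β-α-1) e^(zs) ds` follows by
integrating the exponential series term by term against the beta weight, whose moments are ratios of
Pochhammer symbols. For `α ≥ 1` and `β ≥ α + 1` the weight is bounded by its maximum
`λ_{α-1,β-α-1}`, and for `z < 0` one has `∫₀¹ e^(zs) ds ≤ ∫₀^∞ e^(zs) ds = 1/|z|`. Finally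
`z = -p/(t(1-t))` gives `1/|z| = t(1-t)/p ≤ 1/(4p)`.
-/

open Real MeasureTheory

/-- Classical Euler beta function `B(x,y) = ∫₀¹ t^(x-1) (1-t)^(y-1) dt`. -/
noncomputable def eulerBeta (x y : ℝ) : ℝ :=
  ∫ t in (0:ℝ)..1, t ^ (x - 1) * (1 - t) ^ (y - 1)

/-- `λ_{x,y} = x^x y^y / (x+y)^(x+y)`; the convention `0^0 = 1` is automatic for `rpow`. -/
noncomputable def lam (x y : ℝ) : ℝ := x ^ x * y ^ y / (x + y) ^ (x + y)

/-- Pochhammer symbol `(x)_n = x (x+1) ⋯ (x+n-1)`. -/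
noncomputable def poch (x : ℝ) (n : ℕ) : ℝ := ∏ k ∈ Finset.range n, (x + k)

/-- Confluent hypergeometric (Kummer) function `₁F₁(b;c;z)`. -/
noncomputable def oneF1 (b c z : ℝ) : ℝ :=
  ∑' n : ℕ, poch b n / poch c n * z ^ n / (Nat.factorial n : ℝ)

open Nat in
theorem hasSum_integral_mul_exp {μ : Measure ℝ} {w : ℝ → ℝ} (hw : Integrable w μ)
    (hμ : ∀ᵐ s ∂μ, |s| ≤ 1) (z : ℝ) :
    HasSum (fun n : ℕ => z ^ n / n ! * ∫ s, w s * s ^ n ∂μ) (∫ s, w s * exp (z * s) ∂μ) := by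
  have hpow_le : ∀ n : ℕ, ∀ᵐ s ∂μ, ‖s ^ n‖ ≤ 1 :=
    fun n => hμ.mono fun s hs => by simpa [norm_pow] using pow_le_one₀ (abs_nonneg s) hs
  have hterm : ∀ n : ℕ, Integrable (fun s => z ^ n / n ! * (w s * s ^ n)) μ := fun n =>
    (hw.mul_bdd (by fun_prop : Continuous fun s : ℝ => s ^ n).aestronglyMeasurable
      (hpow_le n)).const_mul _
  have hnorm : ∀ n : ℕ,
      ∫ s, ‖z ^ n / n ! * (w s * s ^ n)‖ ∂μ ≤ |z| ^ n / n ! * ∫ s, ‖w s‖ ∂μ := by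
    intro n
    rw [← integral_const_mul]
    refine integral_mono_ae (hterm n).norm (hw.norm.const_mul _) ((hpow_le n).mono fun s hs => ?_)
    dsimp only
    rw [norm_mul, norm_mul, Real.norm_eq_abs (z ^ n / n !), abs_div, abs_pow, Nat.abs_cast]
    exact mul_le_mul_of_nonneg_left (mul_le_of_le_one_right (norm_nonneg _) hs) (by positivity)
  have hsum := hasSum_integral_of_summable_integral_norm hterm <|
    Summable.of_nonneg_of_le (fun n => integral_nonneg fun s => norm_nonneg _) hnorm
      ((Real.summable_pow_div_factorial |z|).mul_right _)
  have hexp : ∀ s, w s * exp (z * s) = ∑' n : ℕ, z ^ n / n ! * (w s * s ^ n) := by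
    intro s
    rw [Real.exp_eq_exp_ℝ, NormedSpace.exp_eq_tsum_div, ← tsum_mul_left]
    congr 1 with n
    ring
  simpa only [integral_const_mul, hexp] using hsum

theorem ofReal_rpow_mul_one_sub_rpow {s : ℝ} (h0 : 0 ≤ s) (h1 : s ≤ 1) (x y : ℝ) :
    ((s ^ (x - 1) * (1 - s) ^ (y - 1) : ℝ) : ℂ)
      = (s : ℂ) ^ ((x : ℂ) - 1) * (1 - (s : ℂ)) ^ ((y : ℂ) - 1) := by
  rw [Complex.ofReal_mul, Complex.ofReal_cpow h0, Complex.ofReal_cpow (by linarith)]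
  push_cast
  rfl

theorem integrableOn_rpow_mul_one_sub_rpow {x y : ℝ} (hx : 0 < x) (hy : 0 < y) :
    IntegrableOn (fun s : ℝ => s ^ (x - 1) * (1 - s) ^ (y - 1)) (Set.Ioc 0 1) := by
  have hc := Complex.betaIntegral_convergent (u := x) (v := y)
    (by simpa using hx) (by simpa using hy)
  rw [intervalIntegrable_iff, Set.uIoc_of_le zero_le_one] at hc
  refine IntegrableOn.congr_fun hc.re (fun s hs => ?_) measurableSet_Ioc
  rw [← ofReal_rpow_mul_one_sub_rpow hs.1.le hs.2, RCLike.re_to_complex, Complex.ofReal_re]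

theorem eulerBeta_eq_Gamma {x y : ℝ} (hx : 0 < x) (hy : 0 < y) :
    eulerBeta x y = Gamma x * Gamma y / Gamma (x + y) := by
  have hB : Complex.betaIntegral x y = eulerBeta x y := by
    rw [eulerBeta, ← intervalIntegral.integral_ofReal]
    refine intervalIntegral.integral_congr fun s hs => ?_
    rw [Set.uIcc_of_le zero_le_one] at hs
    exact (ofReal_rpow_mul_one_sub_rpow hs.1 hs.2 x y).symm
  have h := Complex.Gamma_mul_Gamma_eq_betaIntegral (s := x) (t := y)
    (by simpa using hx) (by simpa using hy)
  rw [hB, ← Complex.ofReal_add, Complex.Gamma_ofReal, Complex.Gamma_ofReal,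
    Complex.Gamma_ofReal, ← Complex.ofReal_mul, ← Complex.ofReal_mul,
    Complex.ofReal_inj] at h
  rw [h, mul_div_cancel_left₀ _ (Gamma_pos_of_pos (add_pos hx hy)).ne']

theorem eulerBeta_pos {x y : ℝ} (hx : 0 < x) (hy : 0 < y) : 0 < eulerBeta x y := by
  rw [eulerBeta_eq_Gamma hx hy]
  have := Gamma_pos_of_pos hx
  have := Gamma_pos_of_pos hy
  have := Gamma_pos_of_pos (add_pos hx hy)
  positivity

theorem poch_pos {x : ℝ} (hx : 0 < x) (n : ℕ) : 0 < poch x n :=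
  Finset.prod_pos fun k _ => by positivity

theorem Gamma_add_nat_eq_poch_mul {x : ℝ} (hx : 0 < x) (n : ℕ) :
    Gamma (x + n) = poch x n * Gamma x := by
  induction n with
  | zero => simp [poch]
  | succ n ih =>
    rw [Nat.cast_succ, ← add_assoc, Gamma_add_one (by positivity), ih, poch, poch,
      Finset.prod_range_succ]
    ring

theorem eulerBeta_add_nat {x y : ℝ} (hx : 0 < x) (hy : 0 < y) (n : ℕ) :
    eulerBeta (x + n) y = poch x n / poch (x + y) n * eulerBeta x y := by
  rw [eulerBeta_eq_Gamma (by positivity) hy, eulerBeta_eq_Gamma hx hy, add_right_comm,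
    Gamma_add_nat_eq_poch_mul hx, Gamma_add_nat_eq_poch_mul (add_pos hx hy)]
  have := (poch_pos (add_pos hx hy) n).ne'
  have := (Gamma_pos_of_pos (add_pos hx hy)).ne'
  field_simp

theorem oneF1_add_eq_setIntegral {b y : ℝ} (hb : 0 < b) (hy : 0 < y) (z : ℝ) :
    oneF1 b (b + y) z =
      (∫ s in Set.Ioc 0 1, s ^ (b - 1) * (1 - s) ^ (y - 1) * exp (z * s)) / eulerBeta b y := by
  have hmoment : ∀ n : ℕ,
      ∫ s in Set.Ioc 0 1, s ^ (b - 1) * (1 - s) ^ (y - 1) * s ^ n = eulerBeta (b + n) y := by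
    intro n
    rw [eulerBeta, intervalIntegral.integral_of_le zero_le_one]
    refine setIntegral_congr_fun measurableSet_Ioc fun s hs => ?_
    rw [add_sub_right_comm, rpow_add hs.1, rpow_natCast]
    ring
  have hsupp : ∀ᵐ s ∂(volume.restrict (Set.Ioc (0 : ℝ) 1)), |s| ≤ 1 :=
    ae_restrict_of_forall_mem measurableSet_Ioc fun s hs => abs_le.2 ⟨by linarith [hs.1], hs.2⟩
  have hsum :=
    (hasSum_integral_mul_exp (integrableOn_rpow_mul_one_sub_rpow hb hy) hsupp z).div_const
      (eulerBeta b y)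
  simp only [hmoment, eulerBeta_add_nat hb hy] at hsum
  rw [oneF1, ← hsum.tsum_eq]
  have := (eulerBeta_pos hb hy).ne'
  congr 1 with n
  field_simp

theorem lam_nonneg {a b : ℝ} (ha : 0 ≤ a) (hb : 0 ≤ b) : 0 ≤ lam a b := by
  unfold lam
  positivity

theorem rpow_le_rpow_self_mul_exp_sub {u a : ℝ} (hu : 0 ≤ u) (ha : 0 ≤ a) :
    u ^ a ≤ a ^ a * exp (u - a) := by
  rcases ha.eq_or_lt with rfl | ha
  · simpa using one_le_exp hu
  have hle : u / a ≤ exp (u / a - 1) := by linarith [add_one_le_exp (u / a - 1)]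
  calc u ^ a = a ^ a * (u / a) ^ a := by
        rw [div_rpow hu ha.le, mul_div_cancel₀ _ (rpow_pos_of_pos ha a).ne']
    _ ≤ a ^ a * exp (u / a - 1) ^ a := by gcongr
    _ = a ^ a * exp (u - a) := by
        rw [← exp_mul, sub_mul, div_mul_cancel₀ _ ha.ne', one_mul]

/-- With `u = s(a+b)` and `v = (1-s)(a+b)`, multiply `u^a ≤ a^a e^(u-a)` and `v^b ≤ b^b e^(v-b)`;
the exponentials cancel because `u + v = a + b`. -/
theorem rpow_mul_one_sub_rpow_le_lam {a b s : ℝ} (ha : 0 ≤ a) (hb : 0 ≤ b) (hs0 : 0 ≤ s)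
    (hs1 : s ≤ 1) : s ^ a * (1 - s) ^ b ≤ lam a b := by
  rcases (add_nonneg ha hb).eq_or_lt with hab | hab
  · obtain ⟨rfl, rfl⟩ : a = 0 ∧ b = 0 := ⟨by linarith, by linarith⟩
    simp [lam]
  have hu := rpow_le_rpow_self_mul_exp_sub (u := s * (a + b)) (by positivity) ha
  have hv := rpow_le_rpow_self_mul_exp_sub (u := (1 - s) * (a + b)) (by nlinarith) hb
  rw [lam, le_div_iff₀ (rpow_pos_of_pos hab _)]
  calc s ^ a * (1 - s) ^ b * (a + b) ^ (a + b)
      = (s * (a + b)) ^ a * ((1 - s) * (a + b)) ^ b := by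
        rw [mul_rpow hs0 hab.le, mul_rpow (by linarith) hab.le, rpow_add hab]
        ring
    _ ≤ a ^ a * exp (s * (a + b) - a) * (b ^ b * exp ((1 - s) * (a + b) - b)) := by
        gcongr
    _ = a ^ a * b ^ b := by
        rw [mul_mul_mul_comm, ← exp_add,
          show s * (a + b) - a + ((1 - s) * (a + b) - b) = 0 by ring, exp_zero, mul_one]

theorem setIntegral_Ioc_exp_mul_le {z : ℝ} (hz : z < 0) {c : ℝ} (hc : 0 ≤ c) :
    ∫ s in Set.Ioc 0 1, c * exp (z * s) ≤ c / -z := by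
  have hint : IntegrableOn (fun s => c * exp (z * s)) (Set.Ioi 0) :=
    (integrableOn_exp_mul_Ioi hz 0).const_mul c
  calc ∫ s in Set.Ioc 0 1, c * exp (z * s)
      ≤ ∫ s in Set.Ioi 0, c * exp (z * s) :=
        setIntegral_mono_set hint (Filter.Eventually.of_forall fun s => by positivity)
          Set.Ioc_subset_Ioi_self.eventuallyLE
    _ = c / -z := by
        rw [integral_const_mul, integral_exp_mul_Ioi hz, mul_zero, exp_zero]
        field_simp

theorem oneF1_add_le_lam_div {b y z : ℝ} (hb : 1 ≤ b) (hy : 1 ≤ y) (hz : z < 0) :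
    oneF1 b (b + y) z ≤ lam (b - 1) (y - 1) / (-z * eulerBeta b y) := by
  have hb0 : 0 < b := by linarith
  have hy0 : 0 < y := by linarith
  have hbound : ∫ s in Set.Ioc 0 1, s ^ (b - 1) * (1 - s) ^ (y - 1) * exp (z * s)
      ≤ ∫ s in Set.Ioc 0 1, lam (b - 1) (y - 1) * exp (z * s) := by
    refine integral_mono_of_nonneg ?_ ?_ ?_
    · refine ae_restrict_of_forall_mem measurableSet_Ioc fun s hs => ?_
      exact mul_nonneg (mul_nonneg (rpow_nonneg hs.1.le _) (rpow_nonneg (sub_nonneg.2 hs.2) _))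
        (exp_pos _).le
    · exact (integrableOn_exp_mul_Ioi hz 0).mono_set Set.Ioc_subset_Ioi_self |>.const_mul _
    · refine ae_restrict_of_forall_mem measurableSet_Ioc fun s hs => ?_
      exact mul_le_mul_of_nonneg_right (rpow_mul_one_sub_rpow_le_lam (sub_nonneg.2 hb)
        (sub_nonneg.2 hy) hs.1.le hs.2) (exp_pos _).le
  rw [oneF1_add_eq_setIntegral hb0 hy0, ← div_div]
  exact div_le_div_of_nonneg_right (hbound.trans <| setIntegral_Ioc_exp_mul_le hz <|
    lam_nonneg (sub_nonneg.2 hb) (sub_nonneg.2 hy)) (eulerBeta_pos hb0 hy0).le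

theorem stmt2 (α β p t : ℝ) (hα : 1 ≤ α) (hβ : α + 1 ≤ β) (hp : 0 < p)
    (ht : t ∈ Set.Ioo (0:ℝ) 1) :
    oneF1 α β (-p / (t * (1 - t))) ≤
      lam (α - 1) (β - α - 1) / (4 * p * eulerBeta α (β - α)) := by
  obtain ⟨ht0, ht1⟩ := ht
  have htt : 0 < t * (1 - t) := mul_pos ht0 (sub_pos.2 ht1)
  have h4p : 4 * p ≤ -(-p / (t * (1 - t))) := by
    rw [neg_div, neg_neg, le_div_iff₀ htt]
    nlinarith [sq_nonneg (2 * t - 1)]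
  have hB := eulerBeta_pos (by linarith : 0 < α) (by linarith : 0 < β - α)
  have hF := oneF1_add_le_lam_div hα (le_sub_iff_add_le'.2 hβ)
    (div_neg_of_neg_of_pos (neg_neg_of_pos hp) htt)
  rw [add_sub_cancel] at hF
  exact hF.trans <| div_le_div_of_nonneg_left (lam_nonneg (by linarith) (by linarith))
    (by positivity) (mul_le_mul_of_nonneg_right h4p hB.le)
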